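/- In the canonical model of LCR: for all maximal consistent sets x, y, every L≻-formula φ, and b ∈ T, if for every a ∈ T and every formula ψ, J_a(φ ≻ ψ) ∈ x implies I_{a⊙b}(ψ) ∈ y, then x R^c_{/φ/} y ≥ b. -/
import Mathlib


namespace LCR

/-- Łukasiewicz negation on ℝ. -/
noncomputable def lneg (a : ℝ) : ℝ := 1 - a

/-- Łukasiewicz implication on ℝ. -/
noncomputable def limp (a b : ℝ) : ℝ := min 1 (1 - a + b)

/-- Łukasiewicz strong conjunction ⊙ on ℝ. -/
noncomputable def lodot (a b : ℝ) : ℝ := max 0 (a + b - 1)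

/-- The truth-value set T = {0, 1/(m−1), …, 1}. -/
def Tset (m : ℕ) : Set ℝ := {a | ∃ i : Fin m, a = (i : ℝ) / ((m : ℝ) - 1)}

/-- The k-th truth value k/(m−1). -/
noncomputable def tv (m : ℕ) (k : Fin m) : ℝ := (k : ℝ) / ((m : ℝ) - 1)

/-- Formulas of the language L≻. -/
inductive Formula : Type where
  | var  : ℕ → Formula
  | neg  : Formula → Formula
  | imp  : Formula → Formula → Formula
  | cond : Formula → Formula → Formula
deriving DecidableEq

namespace Formula
/-- φ ∨ ψ := (φ → ψ) → ψ. -/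
def or (φ ψ : Formula) : Formula := .imp (.imp φ ψ) ψ
/-- φ ∧ ψ := ¬(¬φ ∨ ¬ψ). -/
def and (φ ψ : Formula) : Formula := .neg (Formula.or (.neg φ) (.neg ψ))
/-- φ ↔ ψ := (φ → ψ) ∧ (ψ → φ). -/
def iff (φ ψ : Formula) : Formula := Formula.and (.imp φ ψ) (.imp ψ φ)
end Formula

/-- Purely propositional (¬,→)-formulas. -/
inductive PForm : Type where
  | var : ℕ → PForm
  | neg : PForm → PForm
  | imp : PForm → PForm → PForm

/-- Evaluation of a propositional formula under an assignment. -/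
noncomputable def PForm.eval (σ : ℕ → ℝ) : PForm → ℝ
  | .var n => σ n
  | .neg φ => lneg (PForm.eval σ φ)
  | .imp φ ψ => limp (PForm.eval σ φ) (PForm.eval σ ψ)

/-- Tautology of Łukasiewicz m-valued propositional logic. -/
def PForm.Taut (m : ℕ) (φ : PForm) : Prop :=
  ∀ σ : ℕ → ℝ, (∀ n, σ n ∈ Tset m) → PForm.eval σ φ = 1

/-- Substitution of L≻-formulas for the variables of a propositional formula. -/
def PForm.subst (σ : ℕ → Formula) : PForm → Formula
  | .var n => σ n
  | .neg φ => .neg (PForm.subst σ φ)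
  | .imp φ ψ => .imp (PForm.subst σ φ) (PForm.subst σ ψ)

/-- `J` is a family of Rosser–Turquette J-operators: each `J a` is obtained by substitution
into a (¬,→)-definable one-place connective whose value is 1 at inputs equal to `tv m a`
and 0 at all other truth values. -/
def IsJFamily (m : ℕ) (J : Fin m → Formula → Formula) : Prop :=
  ∃ P : Fin m → PForm,
    (∀ a φ, J a φ = PForm.subst (fun _ => φ) (P a)) ∧
    (∀ (a : Fin m) (σ : ℕ → ℝ), (∀ n, σ n ∈ Tset m) →
      PForm.eval σ (P a) = if σ 0 = tv m a then 1 else 0)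

/-- `I` is a family of threshold operators: each `I a` is obtained by substitution into a
(¬,→)-definable one-place connective whose value is 1 at inputs ≥ `tv m a` and 0 otherwise. -/
def IsIFamily (m : ℕ) (I : Fin m → Formula → Formula) : Prop :=
  ∃ P : Fin m → PForm,
    (∀ a φ, I a φ = PForm.subst (fun _ => φ) (P a)) ∧
    (∀ (a : Fin m) (σ : ℕ → ℝ), (∀ n, σ n ∈ Tset m) →
      PForm.eval σ (P a) = if tv m a ≤ σ 0 then 1 else 0)

/-- The index of aᵢ = (m−i)/(m−1) for i = j+1, i.e. m−1−j. -/
def revIdx {m : ℕ} (j : Fin m) : Fin m := ⟨m - 1 - j.1, by have := j.isLt; omega⟩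

/-- Index-level strong conjunction: tv (odotIdx a b) = tv a ⊙ tv b. -/
def odotIdx {m : ℕ} (a b : Fin m) : Fin m :=
  ⟨a.1 + b.1 - (m - 1), by have := a.isLt; have := b.isLt; omega⟩

/-- Nested implication →ⁿᵢ₌₁(φᵢ, ψ) = φₙ → (φₙ₋₁ → (⋯ → (φ₁ → ψ))), with φᵢ = f (i−1). -/
def nestImp : (n : ℕ) → (Fin n → Formula) → Formula → Formula
  | 0, _, ψ => ψ
  | n+1, f, ψ => .imp (f (Fin.last n)) (nestImp n (fun i => f i.castSucc) ψ)

/-- Theorems of the system LCR (relative to the I-operators used in the rules R_a). -/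
inductive Thm (m : ℕ) (I : Fin m → Formula → Formula) : Formula → Prop where
  | taut : ∀ (ψ : PForm) (σ : ℕ → Formula), PForm.Taut m ψ → Thm m I (PForm.subst σ ψ)
  | a1 : ∀ φ ψ θ : Formula,
      Thm m I (.imp (.cond φ (ψ.and θ)) ((Formula.cond φ ψ).and (.cond φ θ)))
  | a2 : ∀ φ ψ θ : Formula,
      Thm m I (.imp ((Formula.cond φ ψ).and (.cond φ θ)) (.cond φ (ψ.and θ)))
  | a3 : ∀ (φ : Formula) (p : ℕ), Thm m I (.cond φ (.imp (.var p) (.var p)))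
  | mp : ∀ φ ψ : Formula, Thm m I (.imp φ ψ) → Thm m I φ → Thm m I ψ
  | rcea : ∀ φ ψ θ : Formula,
      Thm m I (φ.iff ψ) → Thm m I ((Formula.cond φ θ).iff (.cond ψ θ))
  | rcec : ∀ φ ψ θ : Formula,
      Thm m I (φ.iff ψ) → Thm m I ((Formula.cond θ φ).iff (.cond θ ψ))
  | ra : ∀ (a : Fin m) (φ : Formula) (γ : Fin m → Formula) (δ : Formula),
      (∀ b : Fin m,
        Thm m I (nestImp m (fun j => I (odotIdx (revIdx j) b) (γ j)) (I (odotIdx a b) δ))) →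
      Thm m I (nestImp m (fun j => I (revIdx j) (.cond φ (γ j))) (I a (.cond φ δ)))

/-- Γ ⊢_LCR φ : derivability from Γ by theorems of LCR and modus ponens. -/
inductive Deriv (m : ℕ) (I : Fin m → Formula → Formula) (Γ : Set Formula) : Formula → Prop where
  | thm : ∀ φ, Thm m I φ → Deriv m I Γ φ
  | mem : ∀ φ, φ ∈ Γ → Deriv m I Γ φ
  | mp : ∀ φ ψ, Deriv m I Γ (.imp φ ψ) → Deriv m I Γ φ → Deriv m I Γ ψ

/-- A Kripke LCR model over a set of worlds W. -/
structure Model (m : ℕ) (W : Type) : Type where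
  ne : Nonempty W
  R : (Fin m → Set W) → W → W → ℝ
  R_mem : ∀ X x y, R X x y ∈ Tset m
  v : ℕ → W → ℝ
  v_mem : ∀ p x, v p x ∈ Tset m

/-- Valuation of formulas in a Kripke LCR model. -/
noncomputable def Model.val {m : ℕ} {W : Type} (M : Model m W) : Formula → W → ℝ
  | .var p, x => M.v p x
  | .neg φ, x => lneg (M.val φ x)
  | .imp φ ψ, x => limp (M.val φ x) (M.val ψ x)
  | .cond φ ψ, x =>
      sInf (Set.range fun y : W =>
        limp (M.R (fun i => {z : W | M.val φ z = tv m i}) x y) (M.val ψ y))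

/-- Semantic consequence Γ ⊨ φ over all Kripke LCR models. -/
def Entails (m : ℕ) (Γ : Set Formula) (φ : Formula) : Prop :=
  ∀ (W : Type) (M : Model m W) (x : W), (∀ ψ ∈ Γ, M.val ψ x = 1) → M.val φ x = 1

/-- Syntactic consistency. -/
def Consistent (m : ℕ) (I : Fin m → Formula → Formula) (Γ : Set Formula) : Prop :=
  ¬ ∃ φ : Formula, Deriv m I Γ φ ∧ Deriv m I Γ (.neg φ)

/-- Maximal consistency. -/
def MaxConsistent (m : ℕ) (I : Fin m → Formula → Formula) (Γ : Set Formula) : Prop :=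
  Consistent m I Γ ∧ ∀ φ : Formula, Deriv m I Γ φ → φ ∈ Γ


/-- The canonical accessibility relation x R^c_{/φ/} y =
inf{ a → b : J_a(φ ≻ ψ) ∈ x and J_b(ψ) ∈ y }. -/
noncomputable def canonR (m : ℕ) (J : Fin m → Formula → Formula)
    (x y : Set Formula) (φ : Formula) : ℝ :=
  sInf {r : ℝ | ∃ (a b : Fin m) (ψ : Formula),
    J a (.cond φ ψ) ∈ x ∧ J b ψ ∈ y ∧ r = limp (tv m a) (tv m b)}

/-- The worlds of the canonical model: the maximal consistent sets. -/
def CanonW (m : ℕ) (I : Fin m → Formula → Formula) : Type :=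
  {Γ : Set Formula // MaxConsistent m I Γ}


lemma mpos {m : ℕ} (hm : 2 ≤ m) : (0:ℝ) < (m:ℝ) - 1 := by
  have : (2:ℝ) ≤ (m:ℝ) := by exact_mod_cast hm
  linarith

lemma castm1 {m : ℕ} (hm : 2 ≤ m) : ((m - 1 : ℕ) : ℝ) = (m:ℝ) - 1 := by
  rw [Nat.cast_sub (by omega)]; norm_num

lemma tv_last {m : ℕ} (hm : 2 ≤ m) : tv m ⟨m - 1, by omega⟩ = 1 := by
  unfold tv
  simp only [castm1 hm]
  exact div_self (ne_of_gt (mpos hm))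

lemma tv_nonneg {m : ℕ} (hm : 2 ≤ m) (a : Fin m) : 0 ≤ tv m a :=
  div_nonneg (by positivity) (le_of_lt (mpos hm))

lemma tv_le_one {m : ℕ} (hm : 2 ≤ m) (a : Fin m) : tv m a ≤ 1 := by
  unfold tv
  rw [div_le_one (mpos hm)]
  have : a.1 ≤ m - 1 := by have := a.isLt; omega
  have : (a.1 : ℝ) ≤ ((m - 1 : ℕ) : ℝ) := by exact_mod_cast this
  rw [castm1 hm] at this; exact this

lemma tv_lt_tv {m : ℕ} (hm : 2 ≤ m) {c d : Fin m} (hcd : c.1 < d.1) :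
    tv m c < tv m d := by
  unfold tv
  have : (c.1:ℝ) < d.1 := by exact_mod_cast hcd
  gcongr
  · exact mpos hm

/-- Iterated implication with antecedent `var 0`. -/
def iterImp : ℕ → PForm → PForm
  | 0, q => q
  | k+1, q => .imp (.var 0) (iterImp k q)

lemma peel {m : ℕ} (I : Fin m → Formula → Formula) (σ : ℕ → Formula) (q : PForm)
    (hθ : Thm m I (σ 0)) :
    ∀ k, Thm m I (PForm.subst σ (iterImp k q)) → Thm m I (PForm.subst σ q)
  | 0, h => h
  | k+1, h => peel I σ q hθ k (Thm.mp _ _ h hθ)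

lemma iter_lower (σ : ℕ → ℝ) (q : PForm) (h0 : σ 0 ≤ 1)
    (hq0 : PForm.eval σ q = 0) :
    ∀ k : ℕ, min 1 ((k:ℝ) * (1 - σ 0)) ≤ PForm.eval σ (iterImp k q) ∧
      PForm.eval σ (iterImp k q) ≤ 1 := by
  intro k
  induction k with
  | zero => simp [iterImp, hq0]
  | succ k ih =>
    obtain ⟨ih1, ih2⟩ := ih
    constructor
    · show min 1 _ ≤ PForm.eval σ (.imp (.var 0) (iterImp k q))
      simp only [PForm.eval, limp]
      refine le_min (min_le_left _ _) ?_
      rcases le_total ((k:ℝ) * (1 - σ 0)) 1 with hc | hc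
      · rw [min_eq_right hc] at ih1
        refine le_trans (min_le_right _ _) ?_
        push_cast
        nlinarith
      · rw [min_eq_left hc] at ih1
        refine le_trans (min_le_left _ _) ?_
        linarith
    · show PForm.eval σ (.imp (.var 0) (iterImp k q)) ≤ 1
      simp only [PForm.eval, limp]
      exact min_le_left _ _

lemma taut_iter {m : ℕ} (hm : 2 ≤ m) (P : PForm)
    (hP : ∀ σ : ℕ → ℝ, (∀ n, σ n ∈ Tset m) →
      PForm.eval σ P = if σ 0 = 1 then 1 else 0) :
    PForm.Taut m (iterImp (m - 1) P) := by
  intro σ hσ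
  have hev := hP σ hσ
  by_cases h1 : σ 0 = 1
  · rw [if_pos h1] at hev
    have : ∀ k, PForm.eval σ (iterImp k P) = 1 := by
      intro k
      induction k with
      | zero => simpa [iterImp] using hev
      | succ k ih =>
        show PForm.eval σ (.imp (.var 0) (iterImp k P)) = 1
        simp [PForm.eval, limp, ih, h1]
    exact this (m - 1)
  · rw [if_neg h1] at hev
    obtain ⟨i, hi⟩ := hσ 0
    have hiM : i.1 ≤ m - 2 := by
      by_contra hc
      have : i.1 = m - 1 := by have := i.isLt; omega
      apply h1
      rw [hi, this]
      rw [show ((m-1:ℕ):ℝ) = (m:ℝ) - 1 from castm1 hm]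
      exact div_self (ne_of_gt (mpos hm))
    have hM := mpos hm
    have hile : (i.1 : ℝ) ≤ (m:ℝ) - 2 := by
      have : (i.1 : ℝ) ≤ ((m - 2 : ℕ) : ℝ) := by exact_mod_cast hiM
      rwa [show ((m-2:ℕ):ℝ) = (m:ℝ) - 2 by rw [Nat.cast_sub (by omega)]; norm_num] at this
    have h0le : σ 0 ≤ 1 := by
      rw [hi, div_le_one hM]
      linarith
    have hkey : (1:ℝ) ≤ ((m - 1 : ℕ) : ℝ) * (1 - σ 0) := by
      rw [castm1 hm, hi]
      rw [show (1:ℝ) - (i.1:ℝ)/((m:ℝ)-1) = (((m:ℝ)-1) - i.1)/((m:ℝ)-1) by field_simp]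
      rw [mul_div_cancel₀ _ (ne_of_gt hM)]
      linarith
    obtain ⟨hl, hu⟩ := iter_lower σ P h0le hev (m - 1)
    rw [min_eq_left hkey] at hl
    · linarith
    
lemma thm_J_last {m : ℕ} (hm : 2 ≤ m) {J : Fin m → Formula → Formula}
    (hJ : IsJFamily m J) (I : Fin m → Formula → Formula) {θ : Formula}
    (hθ : Thm m I θ) : Thm m I (J ⟨m - 1, by omega⟩ θ) := by
  obtain ⟨P, hP1, hP2⟩ := hJ
  rw [hP1]
  have htaut : PForm.Taut m (iterImp (m - 1) (P ⟨m - 1, by omega⟩)) := by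
    apply taut_iter hm
    intro σ hσ
    rw [hP2 _ σ hσ, tv_last hm]
  have hin : Thm m I (PForm.subst (fun _ => θ) (iterImp (m - 1) (P ⟨m - 1, by omega⟩))) :=
    Thm.taut _ _ htaut
  exact peel I (fun _ => θ) _ hθ (m - 1) hin

lemma mem_of_thm {m : ℕ} {I : Fin m → Formula → Formula} {Γ : Set Formula}
    (hΓ : MaxConsistent m I Γ) {φ : Formula} (hφ : Thm m I φ) : φ ∈ Γ :=
  hΓ.2 φ (Deriv.thm φ hφ)

lemma disjoint_JI {m : ℕ} (hm : 2 ≤ m)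
    {J : Fin m → Formula → Formula} (hJ : IsJFamily m J)
    {I : Fin m → Formula → Formula} (hI : IsIFamily m I)
    {y : Set Formula} (hy : MaxConsistent m I y)
    {c d : Fin m} {ψ : Formula} (hJy : J c ψ ∈ y) (hIy : I d ψ ∈ y)
    (hcd : c.1 < d.1) : False := by
  obtain ⟨PJ, hJ1, hJ2⟩ := hJ
  obtain ⟨PI, hI1, hI2⟩ := hI
  have htaut : PForm.Taut m (.imp (PJ c) (.neg (PI d))) := by
    intro σ hσ
    simp only [PForm.eval, hJ2 c σ hσ, hI2 d σ hσ, limp, lneg]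
    by_cases h1 : σ 0 = tv m c
    · have : ¬ tv m d ≤ σ 0 := by
        rw [h1]; exact not_le.mpr (tv_lt_tv hm hcd)
      rw [if_pos h1, if_neg this]
      norm_num
    · rw [if_neg h1]
      rcases le_or_gt (tv m d) (σ 0) with h2 | h2
      · rw [if_pos h2]; norm_num
      · rw [if_neg (not_le.mpr h2)]; norm_num
  have hthm : Thm m I (.imp (J c ψ) (.neg (I d ψ))) := by
    have := Thm.taut (m := m) (I := I) _ (fun _ => ψ) htaut
    simpa [PForm.subst, hJ1, hI1] using this
  have h1 : Deriv m I y (.neg (I d ψ)) :=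
    Deriv.mp _ _ (Deriv.thm _ hthm) (Deriv.mem _ hJy)
  exact hy.1 ⟨I d ψ, Deriv.mem _ hIy, h1⟩
/-- in the canonical model, if J_a(φ ≻ ψ) ∈ x implies I_{a⊙b}(ψ) ∈ y
for all a and ψ, then x R^c_{/φ/} y ≥ b. -/
theorem I_mem_implies_canonR_ge (m : ℕ) (hm : 2 ≤ m)
    (J : Fin m → Formula → Formula) (hJ : IsJFamily m J)
    (I : Fin m → Formula → Formula) (hI : IsIFamily m I)
    (x y : Set Formula) (hx : MaxConsistent m I x) (hy : MaxConsistent m I y)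
    (φ : Formula) (b : Fin m)
    (h : ∀ (a : Fin m) (ψ : Formula), J a (.cond φ ψ) ∈ x → I (odotIdx a b) ψ ∈ y) :
    tv m b ≤ canonR m J x y φ := by
  have hM := mpos hm
  apply le_csInf
  · refine ⟨1, ⟨m - 1, by omega⟩, ⟨m - 1, by omega⟩, .imp (.var 0) (.var 0), ?_, ?_, ?_⟩
    · exact mem_of_thm hx (thm_J_last hm hJ I (Thm.a3 φ 0))
    · refine mem_of_thm hy (thm_J_last hm hJ I ?_)
      have htaut : PForm.Taut m (.imp (.var 0) (.var 0)) := by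
        intro σ hσ; simp [PForm.eval, limp]
      exact Thm.taut (.imp (.var 0) (.var 0)) (fun n => .var n) htaut
    · rw [tv_last hm]; simp [limp]
  · rintro r ⟨a, c, ψ, hax, hcy, rfl⟩
    have hIy := h a ψ hax
    have hle : (odotIdx a b).1 ≤ c.1 := by
      by_contra hlt
      push_neg at hlt
      exact disjoint_JI hm hJ hI hy hcy hIy hlt
    have hnat : b.1 + a.1 ≤ (m - 1) + c.1 := by
      have ha := a.isLt; have hb := b.isLt
      simp only [odotIdx] at hle
      omega
    have hcast : (b.1:ℝ) + a.1 ≤ ((m:ℝ) - 1) + c.1 := by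
      have h' : ((b.1:ℕ):ℝ) + ((a.1:ℕ):ℝ) ≤ ((m - 1:ℕ):ℝ) + ((c.1:ℕ):ℝ) := by
        exact_mod_cast hnat
      rwa [castm1 hm] at h'
    show tv m b ≤ min 1 (1 - tv m a + tv m c)
    refine le_min (tv_le_one hm b) ?_
    have expand : (1:ℝ) - tv m a + tv m c = (((m:ℝ) - 1) - a.1 + c.1) / ((m:ℝ) - 1) := by
      unfold tv; field_simp
    rw [expand]
    show (b.1:ℝ) / ((m:ℝ) - 1) ≤ _
    gcongr
    linarith

end LCR
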